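/- arXiv:2505.15990 — 3 statements merged into one kernel-verified Lean document; each statement's English description precedes it below -/
import Mathlib

section
/- In a Nelson algebra, the identity (NT3): ((x→z)→y)→(((y→x)→y)→y)=1 holds for all x,y,z if and only if the identity y = ((x→z)→y) ∧ ((y→x)→y) holds for all x,y,z. -/
/-- A Nelson algebra: a distributive lattice (axioms N1, N2) with a De Morgan
involution `tilde` (N3, N4), the Kleene condition (N5), and a weak implication
`imp` satisfying (N6)-(N8). -/
class NelsonAlgebra (N : Type*) extends DistribLattice N where
  one : N
  tilde : N → N
  imp : N → N → N
  tilde_tilde : ∀ x : N, tilde (tilde x) = x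
  tilde_sup : ∀ x y : N, tilde (x ⊔ y) = tilde x ⊓ tilde y
  kleene : ∀ x y : N, x ⊓ tilde x = (x ⊓ tilde x) ⊓ (y ⊔ tilde y)
  imp_self : ∀ x : N, imp x x = one
  imp_imp : ∀ x y z : N, imp x (imp y z) = imp (x ⊓ y) z
  inf_imp : ∀ x y : N, x ⊓ imp x y = x ⊓ (tilde x ⊔ y)

open NelsonAlgebra

section Lemmas

variable {N : Type*} [NelsonAlgebra N]

private lemma nel_le_one (x : N) : x ≤ (one : N) := by
  have h := inf_imp x x
  rw [NelsonAlgebra.imp_self] at h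
  have hx : x ⊓ (one : N) = x := by
    rw [h, inf_eq_left]
    exact le_sup_right
  exact inf_eq_left.mp hx

private lemma nel_inf_one (x : N) : x ⊓ (one : N) = x :=
  inf_eq_left.mpr (nel_le_one x)

private lemma nel_tilde_antitone {a b : N} (h : a ≤ b) : tilde b ≤ tilde a := by
  have hs := tilde_sup a b
  rw [sup_eq_right.mpr h] at hs
  rw [hs]
  exact inf_le_left

private lemma nel_kleene_le (x y : N) : x ⊓ tilde x ≤ y ⊔ tilde y :=
  (kleene x y).le.trans inf_le_right

private lemma nel_imp_one (a : N) : imp a (one : N) = one := by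
  have : imp a (imp a a) = imp a a := by
    rw [NelsonAlgebra.imp_imp, inf_idem]
  rw [NelsonAlgebra.imp_self] at this
  rw [this]

private lemma nel_le_imp_eq_one {a b : N} (h : a ≤ b) : imp a b = one := by
  have : imp a (imp b b) = imp (a ⊓ b) b := NelsonAlgebra.imp_imp a b b
  rw [NelsonAlgebra.imp_self, inf_eq_left.mpr h, nel_imp_one] at this
  exact this.symm

private lemma nel_f6 {a b : N} (h : imp a b = one) : a ≤ tilde a ⊔ b := by
  have := inf_imp a b
  rw [h, nel_inf_one] at this
  exact this.le.trans inf_le_right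

private lemma nel_d {a b : N} (h : a ≤ tilde a ⊔ b) : imp a b = one := by
  have h1 : a ⊓ imp a b = a := by
    rw [inf_imp, inf_eq_left.mpr h]
  have h2 : a ≤ imp a b := inf_eq_left.mp h1
  have h3 : imp a (imp a b) = one := nel_le_imp_eq_one h2
  rw [NelsonAlgebra.imp_imp, inf_idem] at h3
  exact h3

/-- C7 : `tilde c ≤ imp c y`. -/
private lemma nel_tilde_le_imp (c y : N) : tilde c ≤ imp c y := by
  set w := imp c y with hw
  have hcw : c ⊓ w = c ⊓ (tilde c ⊔ y) := inf_imp c y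
  have h1 : c ⊓ tilde c ≤ w := by
    have : c ⊓ tilde c ≤ c ⊓ (tilde c ⊔ y) :=
      le_inf inf_le_left (inf_le_right.trans le_sup_left)
    rw [← hcw] at this
    exact this.trans inf_le_right
  have h2 : imp (tilde c ⊓ c) y = one := by
    apply nel_d
    have e2 : tilde (tilde c ⊓ c) = c ⊔ tilde c := by
      have e1 : tilde c ⊓ c = tilde (c ⊔ tilde c) := by
        rw [tilde_sup, tilde_tilde, inf_comm]
      rw [e1, tilde_tilde]
    rw [e2]
    exact le_sup_of_le_left (le_sup_of_le_right inf_le_left)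
  have h3 : imp (tilde c) w = one := by
    rw [hw, NelsonAlgebra.imp_imp]
    exact h2
  have h4 : tilde c ≤ tilde (tilde c) ⊔ w := nel_f6 h3
  rw [tilde_tilde] at h4
  have h5 : tilde c = (tilde c ⊓ c) ⊔ (tilde c ⊓ w) := by
    conv_lhs => rw [← inf_eq_left.mpr h4]
    rw [inf_sup_left]
  rw [h5]
  exact sup_le ((inf_comm _ _).le.trans h1) inf_le_right

/-- from C7 : `tilde (imp c y) ≤ c`. -/
private lemma nel_tilde_imp_le (c y : N) : tilde (imp c y) ≤ c := by
  have := nel_tilde_antitone (nel_tilde_le_imp c y)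
  rwa [tilde_tilde] at this

/-- Lemma Y : `y ≤ imp c y`. -/
private lemma nel_le_imp_self (c y : N) : y ≤ imp c y := by
  set w := imp c y with hw
  have h1 : imp y w = one := by
    rw [hw, NelsonAlgebra.imp_imp]
    exact nel_le_imp_eq_one inf_le_left
  have h2 : y ≤ tilde y ⊔ w := nel_f6 h1
  have hcw : c ⊓ w = c ⊓ (tilde c ⊔ y) := inf_imp c y
  have hyc : y ⊓ c ≤ w := by
    have : y ⊓ c ≤ c ⊓ (tilde c ⊔ y) := le_inf inf_le_right (inf_le_left.trans le_sup_right)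
    rw [← hcw] at this
    exact this.trans inf_le_right
  have h3 : y ⊓ tilde y ≤ w := by
    have hk : y ⊓ tilde y ≤ (y ⊓ tilde y) ⊓ (w ⊔ tilde w) := (kleene y w).le
    have : (y ⊓ tilde y) ⊓ (w ⊔ tilde w) = ((y ⊓ tilde y) ⊓ w) ⊔ ((y ⊓ tilde y) ⊓ tilde w) :=
      inf_sup_left _ _ _
    refine hk.trans (this.le.trans (sup_le inf_le_right ?_))
    have : (y ⊓ tilde y) ⊓ tilde w ≤ y ⊓ c :=
      le_inf (inf_le_left.trans inf_le_left) (inf_le_right.trans (nel_tilde_imp_le c y))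
    exact this.trans hyc
  calc y = y ⊓ (tilde y ⊔ w) := (inf_eq_left.mpr h2).symm
    _ = (y ⊓ tilde y) ⊔ (y ⊓ w) := inf_sup_left _ _ _
    _ ≤ w := sup_le h3 inf_le_right

end Lemmas

theorem nt3_iff_fn2 {N : Type*} [NelsonAlgebra N] :
    (∀ x y z : N,
        imp (imp (imp x z) y) (imp (imp (imp y x) y) y) = NelsonAlgebra.one) ↔
    (∀ x y z : N, y = imp (imp x z) y ⊓ imp (imp y x) y) := by
  constructor
  · intro H x y z
    set u := imp x z with hu
    set v := imp y x with hv
    set A := imp u y with hA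
    set B := imp v y with hB
    -- y ≤ A ⊓ B
    have hyA : y ≤ A := nel_le_imp_self u y
    have hyB : y ≤ B := nel_le_imp_self v y
    have hyt : y ≤ A ⊓ B := le_inf hyA hyB
    -- from H : imp (A ⊓ B) y = one
    have hH : imp (A ⊓ B) y = one := by
      have := H x y z
      rwa [NelsonAlgebra.imp_imp] at this
    have hf6 : A ⊓ B ≤ tilde (A ⊓ B) ⊔ y := nel_f6 hH
    -- tilde v ≤ y
    have htv : tilde v ≤ y := nel_tilde_imp_le y x
    -- B ⊓ v ≤ y
    have hBv : B ⊓ v ≤ y := by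
      have : v ⊓ B = v ⊓ (tilde v ⊔ y) := inf_imp v y
      rw [sup_eq_right.mpr htv] at this
      exact (inf_comm B v).le.trans (this.le.trans inf_le_right)
    -- A ⊓ u decomposition:  A ⊓ u ≤ (u ⊓ tilde u) ⊔ y
    have hAu : u ⊓ A = u ⊓ (tilde u ⊔ y) := inf_imp u y
    -- u ⊓ tilde u ⊓ B ≤ y
    have huuB : (u ⊓ tilde u) ⊓ B ≤ y := by
      have hk : u ⊓ tilde u ≤ v ⊔ tilde v := nel_kleene_le u v
      have : (u ⊓ tilde u) ⊓ B ≤ (v ⊔ tilde v) ⊓ B := inf_le_inf_right B hk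
      refine this.trans ?_
      rw [inf_sup_right]
      exact sup_le ((inf_comm v B).le.trans hBv) (inf_le_left.trans htv)
    -- tilde (A ⊓ B) ⊓ (A ⊓ B) ≤ y
    have htilde_inf : tilde (A ⊓ B) = tilde A ⊔ tilde B := by
      have : A ⊓ B = tilde (tilde A ⊔ tilde B) := by
        rw [tilde_sup, tilde_tilde, tilde_tilde]
      rw [this, tilde_tilde]
    have httA : (A ⊓ B) ⊓ tilde A ≤ y := by
      have h1 : (A ⊓ B) ⊓ tilde A ≤ (A ⊓ B) ⊓ u :=
        inf_le_inf_left _ (nel_tilde_imp_le u y)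
      have h2 : (A ⊓ B) ⊓ u ≤ (u ⊓ A) ⊓ B :=
        le_inf (le_inf inf_le_right (inf_le_left.trans inf_le_left))
          (inf_le_left.trans inf_le_right)
      have h3 : (u ⊓ A) ⊓ B ≤ y := by
        rw [hAu, inf_sup_left, inf_sup_right]
        exact sup_le huuB ((inf_le_left.trans inf_le_right))
      exact h1.trans (h2.trans h3)
    have httB : (A ⊓ B) ⊓ tilde B ≤ y := by
      have h1 : (A ⊓ B) ⊓ tilde B ≤ B ⊓ v :=
        le_inf (inf_le_left.trans inf_le_right) (inf_le_right.trans (nel_tilde_imp_le v y))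
      exact h1.trans hBv
    have htt : (A ⊓ B) ⊓ tilde (A ⊓ B) ≤ y := by
      rw [htilde_inf, inf_sup_left]
      exact sup_le httA httB
    -- conclude
    have hty : A ⊓ B ≤ y := by
      calc A ⊓ B = (A ⊓ B) ⊓ (tilde (A ⊓ B) ⊔ y) := (inf_eq_left.mpr hf6).symm
        _ = ((A ⊓ B) ⊓ tilde (A ⊓ B)) ⊔ ((A ⊓ B) ⊓ y) := inf_sup_left _ _ _
        _ ≤ y := sup_le htt inf_le_right
    exact le_antisymm hyt hty
  · intro F x y z
    have := F x y z
    rw [NelsonAlgebra.imp_imp, ← this, NelsonAlgebra.imp_self]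
end

section
/- Every five-valued Nelson algebra is linear: for all x, y, (x→y) ∨ (y→x) = 1. -/
open NelsonAlgebra

namespace NelsonAux

variable {N : Type*} [NelsonAlgebra N]

lemma inf_one (x : N) : x ⊓ one = x := by
  have h := NelsonAlgebra.inf_imp x x
  rw [NelsonAlgebra.imp_self] at h
  rw [h, inf_eq_left]
  exact le_sup_right

lemma le_one (x : N) : x ≤ (one : N) := by
  calc x = x ⊓ one := (inf_one x).symm
    _ ≤ one := inf_le_right

lemma tilde_inf (x y : N) : tilde (x ⊓ y) = tilde x ⊔ tilde y := by
  have h := tilde_sup (tilde x) (tilde y)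
  rw [tilde_tilde, tilde_tilde] at h
  calc tilde (x ⊓ y) = tilde (tilde (tilde x ⊔ tilde y)) := by rw [h]
    _ = tilde x ⊔ tilde y := tilde_tilde _

lemma tilde_antitone {x y : N} (h : x ≤ y) : tilde y ≤ tilde x := by
  have h1 : x ⊔ y = y := sup_eq_right.mpr h
  calc tilde y = tilde (x ⊔ y) := by rw [h1]
    _ = tilde x ⊓ tilde y := tilde_sup x y
    _ ≤ tilde x := inf_le_left

lemma tilde_one_le (x : N) : tilde (one : N) ≤ x := by
  have := tilde_antitone (le_one (tilde x))
  rwa [tilde_tilde] at this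

lemma imp_one_left (y : N) : imp (one : N) y = y := by
  have h := NelsonAlgebra.inf_imp (one : N) y
  rw [inf_comm (one : N) (imp one y), inf_one, inf_comm (one : N) _, inf_one] at h
  rw [h, sup_eq_right]
  exact tilde_one_le y

/-- Core identity: `(a ⊓ (~a ⊔ b)) → b = 1`. -/
lemma core (a b : N) : imp (a ⊓ (tilde a ⊔ b)) b = one := by
  have h : imp (imp a b) (imp a b) = one := NelsonAlgebra.imp_self _
  rw [NelsonAlgebra.imp_imp, inf_comm (imp a b) a, NelsonAlgebra.inf_imp] at h
  exact h

/-- C⇐ : if `a ≤ ~a ⊔ b` then `a → b = 1`. -/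
lemma le_imp {a b : N} (h : a ≤ tilde a ⊔ b) : imp a b = one := by
  have h1 : a ⊓ (tilde a ⊔ b) = a := inf_eq_left.mpr h
  calc imp a b = imp (a ⊓ (tilde a ⊔ b)) b := by rw [h1]
    _ = one := core a b

/-- C⇒ : if `a → b = 1` then `a ≤ ~a ⊔ b`. -/
lemma imp_le {a b : N} (h : imp a b = one) : a ≤ tilde a ⊔ b := by
  have h2 := NelsonAlgebra.inf_imp a b
  rw [h, inf_one] at h2
  exact le_of_eq_of_le h2 inf_le_right

/-- Key sublemma for `sup_imp`. -/
lemma sup_imp_aux {u w c : N} (hu : u ≤ tilde u ⊔ c) (hw : w ≤ tilde w ⊔ c) :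
    u ≤ (tilde u ⊓ tilde w) ⊔ c := by
  have h1 : u = (u ⊓ tilde u) ⊔ (u ⊓ c) := by
    calc u = u ⊓ (tilde u ⊔ c) := (inf_eq_left.mpr hu).symm
      _ = (u ⊓ tilde u) ⊔ (u ⊓ c) := inf_sup_left u (tilde u) c
  refine h1.le.trans (sup_le ?_ (le_sup_of_le_right inf_le_right))
  have hk : u ⊓ tilde u = (u ⊓ tilde u ⊓ w) ⊔ (u ⊓ tilde u ⊓ tilde w) := by
    calc u ⊓ tilde u = u ⊓ tilde u ⊓ (w ⊔ tilde w) := kleene u w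
      _ = (u ⊓ tilde u ⊓ w) ⊔ (u ⊓ tilde u ⊓ tilde w) := inf_sup_left _ _ _
  refine hk.le.trans (sup_le ?_
    (le_sup_of_le_left (inf_le_inf_right _ inf_le_right)))
  calc u ⊓ tilde u ⊓ w ≤ u ⊓ tilde u ⊓ (tilde w ⊔ c) := inf_le_inf_left _ hw
    _ = (u ⊓ tilde u ⊓ tilde w) ⊔ (u ⊓ tilde u ⊓ c) := inf_sup_left _ _ _
    _ ≤ (tilde u ⊓ tilde w) ⊔ c :=
        sup_le (le_sup_of_le_left (inf_le_inf_right _ inf_le_right))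
          (le_sup_of_le_right inf_le_right)

/-- Joining on the left preserves provable implication. -/
lemma sup_imp {a b c : N} (ha : imp a c = one) (hb : imp b c = one) :
    imp (a ⊔ b) c = one := by
  apply le_imp
  rw [tilde_sup]
  apply sup_le
  · exact le_trans (sup_imp_aux (imp_le ha) (imp_le hb)) le_rfl
  · have := sup_imp_aux (imp_le hb) (imp_le ha)
    rwa [inf_comm (tilde b) (tilde a)] at this

/-- Transitivity of provable implication. -/
lemma trans_imp {a b c : N} (hab : imp a b = one) (hbc : imp b c = one) :
    imp a c = one := by
  have ha : a = (a ⊓ tilde a) ⊔ (a ⊓ b) := by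
    calc a = a ⊓ (tilde a ⊔ b) := (inf_eq_left.mpr (imp_le hab)).symm
      _ = (a ⊓ tilde a) ⊔ (a ⊓ b) := inf_sup_left a (tilde a) b
  have h1 : imp (a ⊓ tilde a) c = one := by
    apply le_imp
    rw [tilde_inf, tilde_tilde]
    exact le_sup_of_le_left (inf_le_left.trans le_sup_right)
  have h2 : imp (a ⊓ b) c = one := by
    apply le_imp
    rw [tilde_inf]
    calc a ⊓ b ≤ b := inf_le_right
      _ ≤ tilde b ⊔ c := imp_le hbc
      _ ≤ tilde a ⊔ tilde b ⊔ c := sup_le_sup_right le_sup_right c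
  calc imp a c = imp ((a ⊓ tilde a) ⊔ (a ⊓ b)) c := by rw [← ha]
    _ = one := sup_imp h1 h2

/-- Meet-monotonicity of provable implication. -/
lemma inf_mono_imp {u u' : N} (w : N) (h : imp u u' = one) :
    imp (w ⊓ u) (w ⊓ u') = one := by
  apply le_imp
  rw [tilde_inf]
  calc w ⊓ u ≤ w ⊓ (tilde u ⊔ u') := inf_le_inf_left w (imp_le h)
    _ = (w ⊓ tilde u) ⊔ (w ⊓ u') := inf_sup_left _ _ _
    _ ≤ (tilde w ⊔ tilde u) ⊔ (w ⊓ u') :=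
        sup_le_sup_right (inf_le_right.trans le_sup_right) _

lemma imp_right_one (x : N) : imp x one = one := by
  calc imp x one = imp x (imp x x) := by rw [NelsonAlgebra.imp_self]
    _ = imp (x ⊓ x) x := NelsonAlgebra.imp_imp x x x
    _ = one := by rw [inf_idem, NelsonAlgebra.imp_self]

/-- `y → (x → y) = 1`. -/
lemma imp_weaken (x y : N) : imp y (imp x y) = one := by
  calc imp y (imp x y) = imp (y ⊓ x) y := NelsonAlgebra.imp_imp y x y
    _ = imp (x ⊓ y) y := by rw [inf_comm]
    _ = imp x (imp y y) := (NelsonAlgebra.imp_imp x y y).symm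
    _ = one := by rw [NelsonAlgebra.imp_self, imp_right_one]

end NelsonAux

open NelsonAux

theorem five_valued_is_linear {N : Type*} [NelsonAlgebra N]
    (h5 : ∀ x y z : N,
      imp (imp (imp x z) y) (imp (imp (imp y x) y) y) = NelsonAlgebra.one) :
    ∀ x y : N, imp x y ⊔ imp y x = NelsonAlgebra.one := by
  intro x y
  set p := imp x y with hp
  set q := imp y x with hq
  set v := p ⊔ q with hv
  set d := imp v x with hd
  have hpv : p ≤ tilde p ⊔ v := le_trans (le_sup_left : p ≤ p ⊔ q) le_sup_right
  have hqv : q ≤ tilde q ⊔ v := le_trans (le_sup_right : q ≤ p ⊔ q) le_sup_right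
  -- Step 1 : p → v = 1
  have S1 : imp p v = one := le_imp hpv
  -- Step 2 : ((v → x) → v) → v = 1, from the five-valued axiom
  have S2 : imp (imp d v) v = one := by
    have h := h5 x v y
    rw [← hp, S1, imp_one_left] at h
    exact h
  -- Step 3 : (d ⊓ v) → x = 1
  have S3 : imp (d ⊓ v) x = one := by
    have h := core v x
    rw [← NelsonAlgebra.inf_imp, ← hd, inf_comm v d] at h
    exact h
  -- Step 4 : y → v = 1
  have S4 : imp y v = one := trans_imp (imp_weaken x y) S1
  -- Step 5/6 : (d ⊓ y) → x = 1
  have S6 : imp (d ⊓ y) x = one := trans_imp (inf_mono_imp d S4) S3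
  -- Step 7 : d → q = 1
  have S7 : imp d q = one := by
    rw [hq, NelsonAlgebra.imp_imp]
    exact S6
  -- Step 8 : d → v = 1
  have S8 : imp d v = one := trans_imp S7 (le_imp hqv)
  -- Conclude
  rw [S8, imp_one_left] at S2
  exact S2
end

section
/- Let N be a nontrivial Nelson algebra and M a maximal deductive system of N with M = φ(M) (where φ(M) is the complement of ∼M). Then the quotient N/M is isomorphic to the two-element Nelson algebra C2, and the congruence classes are exactly M and ∼M. -/
open NelsonAlgebra

/-- A deductive system: contains 1 and is closed under modus ponens. -/
def IsDeductiveSystem {N : Type*} [NelsonAlgebra N] (D : Set N) : Prop :=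
  NelsonAlgebra.one ∈ D ∧ ∀ x y : N, x ∈ D → imp x y ∈ D → y ∈ D

/-- A completely irreducible deductive system: proper, and whenever it is an
intersection of a family of deductive systems it equals one of them. -/
def IsCompletelyIrreducibleDS {N : Type*} [NelsonAlgebra N] (D : Set N) : Prop :=
  IsDeductiveSystem D ∧ D ≠ Set.univ ∧
    ∀ S : Set (Set N), (∀ D' ∈ S, IsDeductiveSystem D') → D = ⋂₀ S → D ∈ S

/-- A maximal deductive system. -/
def IsMaximalDS {N : Type*} [NelsonAlgebra N] (M : Set N) : Prop :=
  IsDeductiveSystem M ∧ M ≠ Set.univ ∧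
    ∀ D : Set N, IsDeductiveSystem D → D ≠ Set.univ → M ⊆ D → M = D

/-- The congruence associated with a deductive system `D`:
`x ≡_D y` iff `x→y, y→x, ∼x→∼y, ∼y→∼x ∈ D`. -/
def dsCong {N : Type*} [NelsonAlgebra N] (D : Set N) (x y : N) : Prop :=
  imp x y ∈ D ∧ imp y x ∈ D ∧ imp (tilde x) (tilde y) ∈ D ∧
    imp (tilde y) (tilde x) ∈ D

section Helpers

variable {N : Type*} [NelsonAlgebra N]

lemma nelson_tilde_inf (x y : N) : tilde (x ⊓ y) = tilde x ⊔ tilde y := by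
  have h := tilde_sup (tilde x) (tilde y)
  rw [tilde_tilde, tilde_tilde] at h
  rw [← h, tilde_tilde]

lemma nelson_imp_one (x : N) : imp x NelsonAlgebra.one = NelsonAlgebra.one := by
  calc imp x NelsonAlgebra.one = imp x (imp x x) := by rw [NelsonAlgebra.imp_self]
    _ = imp (x ⊓ x) x := by rw [imp_imp]
    _ = imp x x := by rw [inf_idem]
    _ = NelsonAlgebra.one := NelsonAlgebra.imp_self x

lemma nelson_le_imp {x y : N} (h : x ≤ y) : imp x y = NelsonAlgebra.one := by
  have h1 : imp x (imp y y) = imp x y := by rw [imp_imp, inf_eq_left.mpr h]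
  rw [NelsonAlgebra.imp_self, nelson_imp_one] at h1
  exact h1.symm

lemma nelson_exfalso (x y : N) : imp (x ⊓ tilde x) y = NelsonAlgebra.one := by
  set a := x ⊓ tilde x with ha
  have hta : tilde a = tilde x ⊔ x := by rw [ha, nelson_tilde_inf, tilde_tilde]
  have h0 : a ≤ tilde a ⊔ y := by
    have : a ≤ tilde a := by
      rw [hta]; exact le_trans inf_le_left le_sup_right
    exact le_trans this le_sup_left
  have h1 : a ≤ imp a y := by
    have h2 := inf_imp a y
    rw [inf_eq_left.mpr h0] at h2
    exact inf_eq_left.mp h2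
  have h3 := nelson_le_imp h1
  rw [imp_imp, inf_idem] at h3
  exact h3

end Helpers

/-- If `M` is a maximal deductive system of a nontrivial Nelson algebra with
`M = φ(M)`, then the congruence classes modulo `M` are exactly `M` and `∼M`
(which partition `N`), and `x ↦ (x ∈ M)` realizes the quotient `N/M` as the
two-element Nelson algebra `C₂` (here `Prop`, with `⊤ = True`, `∼ = ¬`,
`→` the Boolean implication). -/
theorem quotient_by_selfconjugate_maximal_is_C2 {N : Type*} [NelsonAlgebra N]
    [Nontrivial N] (M : Set N) (hM : IsMaximalDS M)
    (hphi : M = (tilde '' M)ᶜ) :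
    (∀ x : N, {y : N | dsCong M x y} = M ∨ {y : N | dsCong M x y} = tilde '' M) ∧
    (M ∪ tilde '' M = Set.univ) ∧ (M ∩ tilde '' M = ∅) ∧
    (∀ x y : N, dsCong M x y ↔ ((x ∈ M) = (y ∈ M))) ∧
    (fun x : N => x ∈ M) NelsonAlgebra.one = True ∧
    (∀ x y : N, ((x ⊓ y) ∈ M) = ((x ∈ M) ∧ (y ∈ M))) ∧
    (∀ x y : N, ((x ⊔ y) ∈ M) = ((x ∈ M) ∨ (y ∈ M))) ∧
    (∀ x : N, (tilde x ∈ M) = ¬(x ∈ M)) ∧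
    (∀ x y : N, (imp x y ∈ M) = ((x ∈ M) → (y ∈ M))) ∧
    Function.Surjective (fun x : N => (x ∈ M : Prop)) := by
  obtain ⟨⟨hone, hmp⟩, hproper, -⟩ := hM
  -- tilde '' M is the complement of M
  have hcompl : tilde '' M = Mᶜ := by
    have h := congrArg compl hphi
    rw [compl_compl] at h
    exact h.symm
  have htilde : ∀ x : N, tilde x ∈ M ↔ x ∉ M := by
    intro x
    constructor
    · intro h hx
      have : tilde x ∈ Mᶜ := by
        rw [← hcompl]; exact ⟨x, hx, rfl⟩
      exact this h
    · intro hx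
      have : x ∈ tilde '' M := by rw [hcompl]; exact hx
      obtain ⟨m, hm, hmx⟩ := this
      have : tilde x = m := by rw [← hmx, tilde_tilde]
      rwa [this]
  -- M is upward closed
  have hup : ∀ x y : N, x ∈ M → x ≤ y → y ∈ M := by
    intro x y hx hxy
    exact hmp x y hx (by rw [nelson_le_imp hxy]; exact hone)
  -- if y ∈ M then imp x y ∈ M
  have himp_of_mem : ∀ x y : N, y ∈ M → imp x y ∈ M := by
    intro x y hy
    have h1 : imp y (imp x y) = NelsonAlgebra.one := by
      rw [imp_imp]; exact nelson_le_imp inf_le_left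
    exact hmp y (imp x y) hy (by rw [h1]; exact hone)
  -- if x ∉ M then imp x y ∈ M
  have himp_of_notmem : ∀ x y : N, x ∉ M → imp x y ∈ M := by
    intro x y hx
    have htx : tilde x ∈ M := (htilde x).mpr hx
    have h1 : imp (tilde x) (imp x y) = NelsonAlgebra.one := by
      rw [imp_imp, inf_comm, nelson_exfalso]
    exact hmp (tilde x) (imp x y) htx (by rw [h1]; exact hone)
  -- imp characterization
  have himp : ∀ x y : N, imp x y ∈ M ↔ (x ∈ M → y ∈ M) := by
    intro x y
    constructor
    · intro h hx; exact hmp x y hx h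
    · intro h
      by_cases hx : x ∈ M
      · exact himp_of_mem x y (h hx)
      · exact himp_of_notmem x y hx
  -- inf characterization
  have hinf : ∀ x y : N, x ⊓ y ∈ M ↔ (x ∈ M ∧ y ∈ M) := by
    intro x y
    constructor
    · intro h
      exact ⟨hup _ x h inf_le_left, hup _ y h inf_le_right⟩
    · rintro ⟨hx, hy⟩
      have h1 : imp x (imp y (x ⊓ y)) = NelsonAlgebra.one := by
        rw [imp_imp, NelsonAlgebra.imp_self]
      have h2 : imp y (x ⊓ y) ∈ M :=
        hmp x _ hx (by rw [h1]; exact hone)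
      exact hmp y _ hy h2
  -- sup characterization
  have hsup : ∀ x y : N, x ⊔ y ∈ M ↔ (x ∈ M ∨ y ∈ M) := by
    intro x y
    constructor
    · intro h
      by_contra hc
      push_neg at hc
      have htxy : tilde (x ⊔ y) ∈ M := by
        rw [tilde_sup]
        exact (hinf _ _).mpr ⟨(htilde x).mpr hc.1, (htilde y).mpr hc.2⟩
      exact (htilde (x ⊔ y)).mp htxy h
    · rintro (hx | hy)
      · exact hup x _ hx le_sup_left
      · exact hup y _ hy le_sup_right
  -- dsCong characterization
  have hcong : ∀ x y : N, dsCong M x y ↔ ((x ∈ M) = (y ∈ M)) := by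
    intro x y
    rw [eq_iff_iff]
    constructor
    · rintro ⟨h1, h2, -, -⟩
      exact ⟨(himp x y).mp h1, (himp y x).mp h2⟩
    · rintro ⟨h1, h2⟩
      refine ⟨(himp x y).mpr h1, (himp y x).mpr h2, (himp _ _).mpr ?_, (himp _ _).mpr ?_⟩
      · intro hx
        rw [htilde] at hx ⊢
        exact fun hy => hx (h2 hy)
      · intro hy
        rw [htilde] at hy ⊢
        exact fun hx => hy (h1 hx)
  obtain ⟨z, hz⟩ := Set.ne_univ_iff_exists_notMem M |>.mp hproper
  refine ⟨?_, ?_, ?_, hcong, eq_true hone, ?_, ?_, ?_, ?_, ?_⟩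
  · intro x
    by_cases hx : x ∈ M
    · left
      ext y
      simp only [Set.mem_setOf_eq, hcong, eq_iff_iff]
      exact ⟨fun h => h.mp hx, fun h => ⟨fun _ => h, fun _ => hx⟩⟩
    · right
      rw [hcompl]
      ext y
      simp only [Set.mem_setOf_eq, hcong, eq_iff_iff, Set.mem_compl_iff]
      exact ⟨fun h hy => hx (h.mpr hy), fun h => ⟨fun h' => absurd h' hx, fun h' => absurd h' h⟩⟩
  · rw [hcompl, Set.union_compl_self]
  · rw [hcompl, Set.inter_compl_self]
  · intro x y; rw [eq_iff_iff]; exact hinf x y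
  · intro x y; rw [eq_iff_iff]; exact hsup x y
  · intro x; rw [eq_iff_iff]; exact htilde x
  · intro x y; rw [eq_iff_iff]; exact himp x y
  · intro p
    by_cases hp : p
    · exact ⟨NelsonAlgebra.one, by simp only [eq_iff_iff]; exact iff_of_true hone hp⟩
    · exact ⟨z, by simp only [eq_iff_iff]; exact iff_of_false hz hp⟩
end
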